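/- arXiv:1908.10159 — 2 statements merged into one kernel-verified Lean document; each statement's English description precedes it below -/
import Mathlib

section
/- Fenwick update correctness: let n be a power of two, A : Fin (n+1) → ℤ, and F the Fenwick array of A (F k = sum of A over (k - 2^(rmb k), k]). Fix 1 ≤ i ≤ n and Δ : ℤ, and let A' agree with A except A' i = A i + Δ. Let F' be obtained from F by adding Δ at every index in the update sequence of i that is ≤ n (u 0 = i, u (j+1) = u j + 2^(rmb (u j)), stopping at 2n). Then F' is the Fenwick array of A'. -/
/-!
The update sequence of `i` is exactly the set of `k` whose Fenwick range `(k - 2^(rmb k), k]`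
contains `i`, so adding `Δ` along it adds `Δ` to precisely the entries whose sums involve `A i`.

Writing `x = 2^r * m` with `m` odd, `updStep x = 2^(r+1) * ((m+1)/2)` has a strictly larger lowest
bit, so the Fenwick ranges grow along the sequence and keep containing `i`. Conversely, if
`i ∈ (k - 2^(rmb k), k]` with `i < k` and `2^s ≤ k - i < 2^(s+1)`, then `k - 2^s` has lowest
bit `s`, is the predecessor of `k` under `updStep`, and its Fenwick range still contains `i`,
so strong induction on `k` reaches `i`.
-/

/-- Position of the least significant set bit of a positive natural. -/
def rmb (i : ℕ) : ℕ := padicValNat 2 i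

/-- Number of 1-bits in the binary representation. -/
def popcount (i : ℕ) : ℕ := (Nat.bits i).count true

/-- One step of the sum sequence: clear the lowest set bit. -/
def sumStep (x : ℕ) : ℕ := x - 2 ^ rmb x

/-- The sum sequence of `i`. -/
def sumSeq (i j : ℕ) : ℕ := sumStep^[j] i

/-- One step of the update sequence. -/
def updStep (x : ℕ) : ℕ := x + 2 ^ rmb x

/-- The update sequence of `i`. -/
def updSeq (i j : ℕ) : ℕ := updStep^[j] i

/-- The Fenwick array of `A`: entry `k` sums `A` over `(k - 2^(rmb k), k]`. -/
def fenwick (A : ℕ → ℤ) (k : ℕ) : ℤ := ∑ m ∈ Finset.Ioc (k - 2 ^ rmb k) k, A m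

private instance : Fact (Nat.Prime 2) := ⟨Nat.prime_two⟩

lemma rmb_two_pow_mul (s : ℕ) {c : ℕ} (hc : c ≠ 0) : rmb (2 ^ s * c) = s + rmb c := by
  rw [rmb, padicValNat.mul (by positivity) hc, padicValNat.prime_pow, rmb]

lemma rmb_eq_zero_of_odd {m : ℕ} (hm : Odd m) : rmb m = 0 :=
  padicValNat.eq_zero_of_not_dvd hm.not_two_dvd_nat

lemma rmb_two_pow_mul_odd (s : ℕ) {m : ℕ} (hm : Odd m) : rmb (2 ^ s * m) = s := by
  rw [rmb_two_pow_mul s hm.pos.ne', rmb_eq_zero_of_odd hm, add_zero]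

lemma two_pow_rmb_dvd (x : ℕ) : 2 ^ rmb x ∣ x := pow_padicValNat_dvd

lemma two_pow_rmb_le {x : ℕ} (hx : x ≠ 0) : 2 ^ rmb x ≤ x :=
  Nat.le_of_dvd (Nat.pos_of_ne_zero hx) (two_pow_rmb_dvd x)

lemma rmb_lt_rmb_updStep {x : ℕ} (hx : x ≠ 0) : rmb x < rmb (updStep x) := by
  obtain ⟨r, m, ⟨t, rfl⟩, rfl⟩ := Nat.exists_eq_two_pow_mul_odd hx
  have hstep : updStep (2 ^ r * (2 * t + 1)) = 2 ^ (r + 1) * (t + 1) := by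
    rw [updStep, rmb_two_pow_mul_odd r (odd_two_mul_add_one t), pow_succ]
    ring
  rw [hstep, rmb_two_pow_mul _ t.succ_ne_zero, rmb_two_pow_mul_odd r (odd_two_mul_add_one t)]
  omega

def fenwickRange (k : ℕ) : Finset ℕ := Finset.Ioc (k - 2 ^ rmb k) k

lemma fenwick_eq_sum_fenwickRange (A : ℕ → ℤ) (k : ℕ) :
    fenwick A k = ∑ m ∈ fenwickRange k, A m := rfl

lemma fenwick_add_single (A : ℕ → ℤ) (i : ℕ) (Δ : ℤ) (k : ℕ) :
    fenwick (A + Pi.single i Δ) k = fenwick A k + if i ∈ fenwickRange k then Δ else 0 := by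
  simp only [fenwick_eq_sum_fenwickRange, Pi.add_apply, Finset.sum_add_distrib,
    Finset.sum_pi_single']

lemma fenwickRange_subset_updStep {x : ℕ} (hx : x ≠ 0) :
    fenwickRange x ⊆ fenwickRange (updStep x) := by
  have hstep : updStep x = x + 2 ^ rmb x := rfl
  have hpow : 2 ^ (rmb x + 1) ≤ 2 ^ rmb (updStep x) :=
    Nat.pow_le_pow_right two_pos (rmb_lt_rmb_updStep hx)
  have hpos : 0 < 2 ^ rmb x := Nat.two_pow_pos _
  have hle : 2 ^ rmb (updStep x) ≤ updStep x := two_pow_rmb_le (by omega)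
  refine Finset.Ioc_subset_Ioc ?_ (by omega)
  rw [pow_succ] at hpow
  omega

lemma self_mem_fenwickRange {i : ℕ} (hi : 0 < i) : i ∈ fenwickRange i := by
  have := Nat.two_pow_pos (rmb i)
  rw [fenwickRange, Finset.mem_Ioc]
  omega

lemma updSeq_succ (i j : ℕ) : updSeq i (j + 1) = updStep (updSeq i j) :=
  Function.iterate_succ_apply' updStep j i

lemma mem_fenwickRange_updSeq {i : ℕ} (hi : 0 < i) (j : ℕ) : i ∈ fenwickRange (updSeq i j) := by
  induction j with
  | zero => exact self_mem_fenwickRange hi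
  | succ j ih =>
    have hne : updSeq i j ≠ 0 := by
      have := (Finset.mem_Ioc.mp ih).2
      omega
    rw [updSeq_succ]
    exact fenwickRange_subset_updStep hne ih

lemma rmb_sub_two_pow {k s : ℕ} (hk : k ≠ 0) (hdvd : 2 ^ (s + 1) ∣ k) : rmb (k - 2 ^ s) = s := by
  obtain ⟨c, rfl⟩ := hdvd
  obtain ⟨c, rfl⟩ := Nat.exists_eq_succ_of_ne_zero (right_ne_zero_of_mul hk)
  have hsub : 2 ^ (s + 1) * (c + 1) - 2 ^ s = 2 ^ s * (2 * c + 1) := by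
    have : 2 ^ (s + 1) * (c + 1) = 2 ^ s * (2 * c + 1) + 2 ^ s := by ring
    omega
  rw [hsub, rmb_two_pow_mul_odd s (odd_two_mul_add_one c)]

lemma updStep_sub_two_pow {k s : ℕ} (hk : k ≠ 0) (hdvd : 2 ^ (s + 1) ∣ k) :
    updStep (k - 2 ^ s) = k := by
  have hle : 2 ^ s ≤ k :=
    le_trans (Nat.pow_le_pow_right two_pos s.le_succ) (Nat.le_of_dvd (Nat.pos_of_ne_zero hk) hdvd)
  rw [updStep, rmb_sub_two_pow hk hdvd]
  omega

lemma exists_updSeq_eq_of_mem_fenwickRange {i : ℕ} (hi : 0 < i) :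
    ∀ k, i ∈ fenwickRange k → ∃ j, updSeq i j = k := by
  intro k
  induction k using Nat.strong_induction_on with
  | _ k ih =>
    intro hik
    obtain ⟨hlo, hhi⟩ := Finset.mem_Ioc.mp hik
    rcases hhi.eq_or_lt with rfl | hlt
    · exact ⟨0, rfl⟩
    set s := Nat.log 2 (k - i)
    have hs_le : 2 ^ s ≤ k - i := Nat.pow_log_le_self 2 (by omega)
    have hs_lt : k - i < 2 ^ (s + 1) := Nat.lt_pow_succ_log_self one_lt_two _
    have hs_rmb : s < rmb k := Nat.log_lt_of_lt_pow (by omega) (by omega)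
    have hk : k ≠ 0 := by omega
    have hdvd : 2 ^ (s + 1) ∣ k :=
      (Nat.pow_dvd_pow 2 hs_rmb).trans (two_pow_rmb_dvd k)
    have hpred : i ∈ fenwickRange (k - 2 ^ s) := by
      rw [fenwickRange, rmb_sub_two_pow hk hdvd, Finset.mem_Ioc]
      rw [pow_succ] at hs_lt
      omega
    obtain ⟨j, hj⟩ := ih (k - 2 ^ s) (by have := Nat.two_pow_pos s; omega) hpred
    refine ⟨j + 1, ?_⟩
    rw [updSeq_succ, hj, updStep_sub_two_pow hk hdvd]

theorem exists_updSeq_eq_iff_mem_fenwickRange {i : ℕ} (hi : 0 < i) (k : ℕ) :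
    (∃ j, updSeq i j = k) ↔ i ∈ fenwickRange k :=
  ⟨fun ⟨j, hj⟩ => hj ▸ mem_fenwickRange_updSeq hi j,
    exists_updSeq_eq_of_mem_fenwickRange hi k⟩

open scoped Classical in
theorem fenwick_update_correct_general (n i : ℕ)
    (h1 : 1 ≤ i) (Δ : ℤ) (A A' : ℕ → ℤ)
    (hA'i : A' i = A i + Δ) (hA' : ∀ k, k ≠ i → A' k = A k)
    (F' : ℕ → ℤ)
    (hF' : ∀ k, F' k = fenwick A k + if (∃ j, updSeq i j = k ∧ k ≤ n) then Δ else 0) :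
    ∀ k, 1 ≤ k → k ≤ n → F' k = fenwick A' k := by
  intro k _ hkn
  have hA'_eq : A' = A + Pi.single i Δ := by
    funext m
    by_cases hm : m = i
    · subst hm
      simp [hA'i]
    · simp [hA' m hm, hm]
  rw [hF', hA'_eq, fenwick_add_single]
  simp only [hkn, and_true, exists_updSeq_eq_iff_mem_fenwickRange h1]

open scoped Classical in
theorem fenwick_update_correct (n i : ℕ) (hn : ∃ h, n = 2 ^ h)
    (h1 : 1 ≤ i) (h2 : i ≤ n) (Δ : ℤ) (A A' : ℕ → ℤ)
    (hA'i : A' i = A i + Δ) (hA' : ∀ k, k ≠ i → A' k = A k)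
    (F' : ℕ → ℤ)
    (hF' : ∀ k, F' k = fenwick A k + if (∃ j, updSeq i j = k ∧ k ≤ n) then Δ else 0) :
    ∀ k, 1 ≤ k → k ≤ n → F' k = fenwick A' k :=
  fenwick_update_correct_general n i h1 Δ A A' hA'i hA' F' hF'
end

section
/- Fenwick sum via bit decomposition: for 1 ≤ i ≤ n, sum(i) computed by the Fenwick tree accesses exactly popcount(i) entries of F, and popcount(i) ≤ log2 n + 1; hence the sequential Fenwick sum algorithm performs at most ⌊log2 n⌋ + 1 array accesses. -/
/-! `sumStep` clears the lowest set bit, so each step of the sum sequence lowers `popcount` by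
one and the sequence is positive for exactly `popcount i` steps. Since every bit of `i ≤ n` sits
below position `Nat.log2 n + 1`, there are at most that many of them. -/

lemma popcount_two_mul (k : ℕ) : popcount (2 * k) = popcount k := by
  rcases eq_or_ne k 0 with rfl | hk
  · rfl
  · simp [popcount, Nat.bit0_bits k hk]

lemma popcount_two_mul_add_one (k : ℕ) : popcount (2 * k + 1) = popcount k + 1 := by
  simp [popcount, Nat.bit1_bits]

lemma popcount_eq_zero {x : ℕ} : popcount x = 0 ↔ x = 0 := by
  refine ⟨fun h => ?_, by rintro rfl; rfl⟩
  induction x using Nat.evenOddRec with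
  | h0 => rfl
  | h_even k ih => rw [ih (popcount_two_mul k ▸ h)]
  | h_odd k _ => simp [popcount_two_mul_add_one] at h

lemma popcount_le_size (x : ℕ) : popcount x ≤ Nat.size x := by
  rw [popcount, ← Nat.size_eq_bits_len]
  exact List.count_le_length

lemma popcount_le_self (x : ℕ) : popcount x ≤ x :=
  (popcount_le_size x).trans (Nat.size_le.mpr Nat.lt_two_pow_self)

lemma size_le_log2_succ (n : ℕ) : Nat.size n ≤ Nat.log2 n + 1 := by
  rw [Nat.size_le, Nat.log2_eq_log_two]
  exact Nat.lt_pow_succ_log_self Nat.one_lt_two n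

lemma popcount_le_log2_succ {i n : ℕ} (h : i ≤ n) : popcount i ≤ Nat.log2 n + 1 :=
  (popcount_le_size i).trans ((Nat.size_le_size h).trans (size_le_log2_succ n))

lemma rmb_two_mul {k : ℕ} (hk : k ≠ 0) : rmb (2 * k) = rmb k + 1 := by
  rw [rmb, rmb, padicValNat.mul two_ne_zero hk, padicValNat.self Nat.one_lt_two, add_comm]

lemma sumStep_two_mul {k : ℕ} (hk : k ≠ 0) : sumStep (2 * k) = 2 * sumStep k := by
  have hle : 2 ^ rmb k ≤ k := Nat.le_of_dvd (Nat.pos_of_ne_zero hk) pow_padicValNat_dvd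
  rw [sumStep, sumStep, rmb_two_mul hk, pow_succ]
  omega

lemma sumStep_two_mul_add_one (k : ℕ) : sumStep (2 * k + 1) = 2 * k := by
  have hodd : rmb (2 * k + 1) = 0 := padicValNat.eq_zero_of_not_dvd (by omega)
  rw [sumStep, hodd, pow_zero, Nat.add_sub_cancel]

lemma popcount_sumStep (x : ℕ) : popcount (sumStep x) = popcount x - 1 := by
  induction x using Nat.evenOddRec with
  | h0 => rfl
  | h_even k ih =>
    rcases eq_or_ne k 0 with rfl | hk
    · rfl
    · rw [sumStep_two_mul hk, popcount_two_mul, popcount_two_mul, ih]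
  | h_odd k _ =>
    rw [sumStep_two_mul_add_one, popcount_two_mul, popcount_two_mul_add_one, Nat.add_sub_cancel]

lemma popcount_sumSeq (x j : ℕ) : popcount (sumSeq x j) = popcount x - j := by
  induction j with
  | zero => rfl
  | succ j ih =>
    rw [sumSeq, Function.iterate_succ_apply', ← sumSeq, popcount_sumStep, ih, Nat.sub_sub]

lemma sumSeq_pos_iff {x j : ℕ} : 0 < sumSeq x j ↔ j < popcount x := by
  rw [Nat.pos_iff_ne_zero, Ne, ← popcount_eq_zero, popcount_sumSeq]
  omega

lemma filter_range_sumSeq_pos {x n : ℕ} (h : popcount x ≤ n) :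
    (Finset.range n).filter (fun j => 0 < sumSeq x j) = Finset.range (popcount x) := by
  ext j
  simp only [Finset.mem_filter, Finset.mem_range, sumSeq_pos_iff]
  omega

theorem fenwick_sum_access_count_general (n i : ℕ) (h2 : i ≤ n) :
    ((Finset.range n).filter fun j => 0 < sumSeq i j).card = popcount i ∧
      popcount i ≤ Nat.log2 n + 1 := by
  rw [filter_range_sumSeq_pos ((popcount_le_self i).trans h2), Finset.card_range]
  exact ⟨rfl, popcount_le_log2_succ h2⟩

theorem fenwick_sum_access_count (n i : ℕ) (h1 : 1 ≤ i) (h2 : i ≤ n) :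
    ((Finset.range n).filter fun j => 0 < sumSeq i j).card = popcount i ∧
      popcount i ≤ Nat.log2 n + 1 :=
  fenwick_sum_access_count_general n i h2
end
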